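/- Let b* be the optimal bottleneck value for weights W. The family of intervals Λ in which each unassigned pair (i,j) (with Π(i,j) = 0) gets the interval [b* − W(i,j), M] for any M (i.e., perturbations v keeping W(i,j) + v ≥ b*), and each assigned pair (with Π(i,j) = 1) gets the perturbations v keeping W(i,j) + v ≤ b*, is allowable relative to Π for W: any perturbation V such that W(i,j)+V(i,j) ≤ b* whenever Π(i,j)=1 and W(i,j)+V(i,j) ≥ b* whenever Π(i,j)=0 preserves bottleneck-optimality of Π. -/
import Mathlib


/-- An assignment `π : A × T → {0,1}` with each task assigned exactly one agent
and each agent assigned at most one task. -/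
def IsAssignment {A T : Type*} [Fintype A] [Fintype T] (π : A × T → ℕ) : Prop :=
  (∀ p, π p = 0 ∨ π p = 1) ∧
  (∀ j : T, ∑ i : A, π (i, j) = 1) ∧
  (∀ i : A, ∑ j : T, π (i, j) ≤ 1)

/-- The bottleneck cost of an assignment: the largest weight among assigned pairs. -/
noncomputable def bcost {A T : Type*} (W : A × T → ℝ) (π : A × T → ℕ) : ℝ :=
  sSup {x : ℝ | ∃ p, π p = 1 ∧ W p = x}

/-- `π` is a bottleneck-optimal assignment for weights `W`. -/
def IsBottleneckOpt {A T : Type*} [Fintype A] [Fintype T] (W : A × T → ℝ)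
    (π : A × T → ℕ) : Prop :=
  IsAssignment π ∧ ∀ π' : A × T → ℕ, IsAssignment π' → bcost W π ≤ bcost W π'

/-- The family of intervals `[lo p, hi p]` is allowable relative to `Pi0` for `W`:
every perturbation contained componentwise in the intervals preserves
bottleneck-optimality of `Pi0`. -/
def AllowableFamily {A T : Type*} [Fintype A] [Fintype T] (W : A × T → ℝ)
    (Pi0 : A × T → ℕ) (lo hi : A × T → ℝ) : Prop :=
  ∀ V : A × T → ℝ, (∀ p, V p ∈ Set.Icc (lo p) (hi p)) →
    IsBottleneckOpt (fun p => W p + V p) Pi0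

lemma bcost_set_eq {A T : Type*} (W : A × T → ℝ) (π : A × T → ℕ) :
    {x : ℝ | ∃ p, π p = 1 ∧ W p = x} = W '' {p | π p = 1} := by
  ext x; simp [Set.mem_image, eq_comm]

lemma bcost_bdd {A T : Type*} [Fintype A] [Fintype T] (W : A × T → ℝ) (π : A × T → ℕ) :
    BddAbove {x : ℝ | ∃ p, π p = 1 ∧ W p = x} := by
  rw [bcost_set_eq]
  exact (Set.toFinite _).image W |>.bddAbove

theorem bottleneck_threshold_perturbation_preserves_optimality
    {A T : Type*} [Fintype A] [Fintype T]
    (hcard : Fintype.card T ≤ Fintype.card A)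
    (W : A × T → ℝ) (Pi0 : A × T → ℕ) (V : A × T → ℝ)
    (hPi0 : IsBottleneckOpt W Pi0)
    (hassigned : ∀ p, Pi0 p = 1 → W p + V p ≤ bcost W Pi0)
    (hunassigned : ∀ p, Pi0 p = 0 → bcost W Pi0 ≤ W p + V p) :
    IsBottleneckOpt (fun p => W p + V p) Pi0 := by
  classical
  obtain ⟨hA, _hopt⟩ := hPi0
  refine ⟨hA, ?_⟩
  intro π' hπ'
  by_cases hT : Nonempty T
  · obtain ⟨j0⟩ := hT
    -- Pi0 assigns some i0 to j0
    have hex0 : ∀ (π : A × T → ℕ), IsAssignment π → ∀ j : T, ∃ i, π (i, j) = 1 := by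
      intro π hπ j
      by_contra h
      push_neg at h
      have hz : ∀ i, π (i, j) = 0 := fun i => (hπ.1 (i, j)).resolve_right (h i)
      have := hπ.2.1 j
      simp [hz] at this
    obtain ⟨i0, hi0⟩ := hex0 Pi0 hA j0
    -- bcost (W+V) Pi0 ≤ bcost W Pi0
    have h1 : bcost (fun p => W p + V p) Pi0 ≤ bcost W Pi0 := by
      refine csSup_le ⟨W (i0, j0) + V (i0, j0), (i0, j0), hi0, rfl⟩ ?_
      rintro x ⟨p, hp, rfl⟩
      exact hassigned p hp
    by_cases hex : ∃ p, π' p = 1 ∧ Pi0 p = 0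
    · obtain ⟨p, hp1, hp0⟩ := hex
      have h2 : W p + V p ≤ bcost (fun p => W p + V p) π' :=
        le_csSup (bcost_bdd _ _) ⟨p, hp1, rfl⟩
      have h3 := hunassigned p hp0
      linarith
    · push_neg at hex
      have hfwd : ∀ p, π' p = 1 → Pi0 p = 1 := by
        intro p hp
        rcases hA.1 p with h | h
        · exact absurd h (hex p hp)
        · exact h
      have hiff : ∀ p, Pi0 p = 1 ↔ π' p = 1 := by
        intro ⟨i, j⟩
        constructor
        · intro h
          obtain ⟨i', hi'⟩ := hex0 π' hπ' j
          have h0 : Pi0 (i', j) = 1 := hfwd _ hi'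
          -- uniqueness: i' = i
          rcases eq_or_ne i' i with rfl | hne
          · exact hi'
          · exfalso
            have hsub : ({i', i} : Finset A) ⊆ Finset.univ := Finset.subset_univ _
            have : (2 : ℕ) ≤ ∑ i : A, Pi0 (i, j) := by
              calc (2 : ℕ) = ∑ k ∈ ({i', i} : Finset A), Pi0 (k, j) := by
                    rw [Finset.sum_pair hne, h0, h]
                _ ≤ _ := Finset.sum_le_sum_of_subset hsub
            rw [hA.2.1 j] at this
            omega
        · exact hfwd _
      have hset : {x : ℝ | ∃ p, Pi0 p = 1 ∧ (W p + V p) = x}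
          = {x : ℝ | ∃ p, π' p = 1 ∧ (W p + V p) = x} := by
        ext x
        constructor
        · rintro ⟨p, hp, rfl⟩; exact ⟨p, (hiff p).mp hp, rfl⟩
        · rintro ⟨p, hp, rfl⟩; exact ⟨p, (hiff p).mpr hp, rfl⟩
      show sSup _ ≤ sSup _
      rw [show {x : ℝ | ∃ p, Pi0 p = 1 ∧ (W p + V p) = x}
          = {x : ℝ | ∃ p, π' p = 1 ∧ (W p + V p) = x} from hset]
  · have hTE : IsEmpty T := not_nonempty_iff.mp hT
    have he : ∀ (π : A × T → ℕ),
        {x : ℝ | ∃ p, π p = 1 ∧ (W p + V p) = x} = ∅ := by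
      intro π
      ext x
      simp only [Set.mem_setOf_eq, Set.mem_empty_iff_false, iff_false]
      rintro ⟨p, _⟩
      exact hTE.elim p.2
    show sSup _ ≤ sSup _
    rw [he Pi0, he π']
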